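/- The map λ ↦ λ/p(λ), with p(λ) = (1/2)(1 − λ + √((1−λ)(1+3λ))), is strictly increasing on (0, 1) and satisfies λ/p(λ) > λ for all λ ∈ (0,1). -/

import Mathlib

noncomputable def wernerProb (lam : ℝ) : ℝ :=
  (1 / 2) * (1 - lam + Real.sqrt ((1 - lam) * (1 + 3 * lam)))

open Set Real

/-! Pulling the factor `1 - λ` out of the square root gives `p(λ) = (1 - λ)(1 + t)/2` with
`t = √((1 + 3λ)/(1 - λ))`, and since `(1 - λ)(t² - 1) = 4λ` this turns the map into
`λ / p(λ) = (t - 1)/2`. The Möbius map `(1 + 3λ)/(1 - λ)` is increasing and nonnegative on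
`[-1/3, 1)`, hence so is `λ / p(λ)`. Finally `λ / p(λ) > λ` because `p(λ) < 1`, which amounts
to `(1 - λ)(1 + 3λ) < (1 + λ)²`. -/

lemma wernerProb_eq_mul_one_add_sqrt {lam : ℝ} (h : lam < 1) :
    wernerProb lam = (1 - lam) * (1 + √((1 + 3 * lam) / (1 - lam))) / 2 := by
  have hpos : 0 < 1 - lam := sub_pos.2 h
  have hsqrt : √((1 - lam) * (1 + 3 * lam)) = (1 - lam) * √((1 + 3 * lam) / (1 - lam)) := by
    rw [← sqrt_sq hpos.le, ← sqrt_mul (sq_nonneg _), sqrt_sq hpos.le]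
    congr 1
    field_simp
  rw [wernerProb, hsqrt]
  ring

lemma div_wernerProb_eq {lam : ℝ} (h : lam ∈ Ico (-1 / 3) 1) :
    lam / wernerProb lam = (√((1 + 3 * lam) / (1 - lam)) - 1) / 2 := by
  have hpos : 0 < 1 - lam := sub_pos.2 h.2
  set t := √((1 + 3 * lam) / (1 - lam)) with ht
  have ht0 : 0 ≤ t := sqrt_nonneg _
  have ht2 : t ^ 2 * (1 - lam) = 1 + 3 * lam := by
    rw [ht, sq_sqrt (div_nonneg (by linarith [h.1]) hpos.le), div_mul_cancel₀ _ hpos.ne']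
  rw [wernerProb_eq_mul_one_add_sqrt h.2, div_eq_iff (by positivity)]
  linear_combination (-1 / 4 : ℝ) * ht2

lemma strictMonoOn_div_wernerProb :
    StrictMonoOn (fun lam => lam / wernerProb lam) (Ico (-1 / 3) 1) := by
  intro a ha b hb hab
  simp only [div_wernerProb_eq ha, div_wernerProb_eq hb]
  have hmobius : (1 + 3 * a) / (1 - a) < (1 + 3 * b) / (1 - b) := by
    rw [div_lt_div_iff₀ (by linarith [ha.2]) (by linarith [hb.2])]
    linarith
  have := sqrt_lt_sqrt (div_nonneg (by linarith [ha.1]) (by linarith [ha.2])) hmobius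
  linarith

lemma wernerProb_pos {lam : ℝ} (h : lam < 1) : 0 < wernerProb lam := by
  unfold wernerProb
  have := sqrt_nonneg ((1 - lam) * (1 + 3 * lam))
  linarith

lemma wernerProb_lt_one {lam : ℝ} (h : 0 < lam) : wernerProb lam < 1 := by
  have : √((1 - lam) * (1 + 3 * lam)) < 1 + lam := by
    rw [sqrt_lt' (by linarith)]
    nlinarith
  unfold wernerProb
  linarith

/-- The map λ ↦ λ/p(λ) is strictly increasing on (0,1) and exceeds λ there. -/
theorem sharpness_recursion_strictMono :
    StrictMonoOn (fun lam => lam / wernerProb lam) (Set.Ioo (0:ℝ) 1) ∧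
    ∀ lam ∈ Set.Ioo (0:ℝ) 1, lam / wernerProb lam > lam := by
  refine ⟨strictMonoOn_div_wernerProb.mono fun lam h => ⟨by linarith [h.1], h.2⟩, ?_⟩
  rintro lam ⟨h0, h1⟩
  rw [gt_iff_lt, lt_div_iff₀ (wernerProb_pos h1)]
  exact mul_lt_of_lt_one_right h0 (wernerProb_lt_one h0)
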